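/- Let ν be a positive integer, set σ = νπ, and let K₂ be the bandlimited kernel defined by K₂(t) = (2σ/π) · (sin(σt)/(σt) − cos(σt)) / (σt)² for t ≠ 0 and K₂(0) = 2σ/(3π). Then for every real t with t ≠ 1 and t ≠ −1, ∫_{-1}^{1} K₂(t−s) sin(νπ s) ds = 2 sin(νπ t) / (νπ² (1 − t²)). -/

import Mathlib

open MeasureTheory Real Complex

/-- The kernel K₂ with removable singularity at 0. -/
noncomputable def K2 (σ : ℝ) (t : ℝ) : ℝ :=
  if t = 0 then 2 * σ / (3 * Real.pi)
  else (2 * σ / Real.pi) * (Real.sin (σ * t) / (σ * t) - Real.cos (σ * t)) / (σ * t) ^ 2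

/-!
Write `K₂(t) = (2σ/π) j(σt)` with `j(u) = (sin u - u cos u)/u³ = j₁(u)/u`, where `j₁` is the
spherical Bessel function of order one. For fixed `a = σt`, the function
`Φ(x) = sin x · j₁(a - x) - cos x · sinc(a - x)` is continuous and satisfies
`Φ'(x) = 2 j(a - x) sin x` for `x ≠ a`, so `Φ(σs)/π` is an antiderivative of
`K₂(t - s) sin(σs)` off the single point `s = t`. At `x = ±νπ` the sine vanishes and
`Φ(x) = -sin a / (a - x)`, which gives the closed form.
-/

open Filter Topology Set

namespace Real

/-- At `u = 0` the junk value `x / 0 = 0` is also the limit. -/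
noncomputable def sphBessel1 (u : ℝ) : ℝ := (sin u - u * cos u) / u ^ 2

noncomputable def sphBessel1Div : ℝ → ℝ :=
  Function.update (fun u => (sin u - u * cos u) / u ^ 3) 0 (1 / 3)

lemma sphBessel1Div_of_ne_zero {u : ℝ} (hu : u ≠ 0) :
    sphBessel1Div u = (sin u - u * cos u) / u ^ 3 :=
  Function.update_of_ne hu _ _

lemma abs_sin_sub_mul_cos_sub_cube_le {u : ℝ} (hu : |u| ≤ 1) :
    |sin u - u * cos u - u ^ 3 / 3| ≤ |u| ^ 4 := by
  have hsin := sin_bound hu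
  have hcos := cos_bound hu
  have h5 : |u| ^ 5 ≤ |u| ^ 4 := pow_le_pow_of_le_one (abs_nonneg u) hu (by norm_num)
  calc |sin u - u * cos u - u ^ 3 / 3|
      = |(sin u - (u - u ^ 3 / 6)) - u * (cos u - (1 - u ^ 2 / 2))| := by ring_nf
    _ ≤ |sin u - (u - u ^ 3 / 6)| + |u| * |cos u - (1 - u ^ 2 / 2)| := by
        rw [← abs_mul]; exact abs_sub _ _
    _ ≤ |u| ^ 5 / 100 + |u| * (|u| ^ 4 * (5 / 96)) := by gcongr
    _ ≤ |u| ^ 4 := by nlinarith [pow_nonneg (abs_nonneg u) 4]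

lemma tendsto_sin_sub_mul_cos_div_cube :
    Tendsto (fun u => (sin u - u * cos u) / u ^ 3) (𝓝[≠] 0) (𝓝 (1 / 3)) := by
  rw [← tendsto_sub_nhds_zero_iff]
  refine squeeze_zero_norm' ?_ (tendsto_abs_nhdsNE_zero.mono_right nhdsWithin_le_nhds)
  filter_upwards [self_mem_nhdsWithin,
    nhdsWithin_le_nhds (Icc_mem_nhds (neg_lt_zero.2 one_pos) one_pos)] with u (hu : u ≠ 0) hu1
  rw [Real.norm_eq_abs, show (sin u - u * cos u) / u ^ 3 - 1 / 3
      = (sin u - u * cos u - u ^ 3 / 3) / u ^ 3 by field_simp,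
    abs_div, abs_pow, div_le_iff₀ (by positivity)]
  calc _ ≤ |u| ^ 4 := abs_sin_sub_mul_cos_sub_cube_le (abs_le.2 hu1)
    _ = |u| * |u| ^ 3 := by ring

@[fun_prop]
lemma continuous_sphBessel1Div : Continuous sphBessel1Div := by
  refine continuous_iff_continuousAt.2 fun u => ?_
  rcases eq_or_ne u 0 with rfl | hu
  · exact continuousAt_update_same.2 tendsto_sin_sub_mul_cos_div_cube
  · rw [sphBessel1Div, continuousAt_update_of_ne hu]
    exact ((continuous_sin.sub (continuous_id.mul continuous_cos)).continuousAt).div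
      (continuous_pow 3).continuousAt (pow_ne_zero 3 hu)

lemma sphBessel1_eq_mul_sphBessel1Div (u : ℝ) : sphBessel1 u = u * sphBessel1Div u := by
  rcases eq_or_ne u 0 with rfl | hu
  · simp [sphBessel1]
  · rw [sphBessel1, sphBessel1Div_of_ne_zero hu]
    field_simp

@[fun_prop]
lemma continuous_sphBessel1 : Continuous sphBessel1 := by
  rw [funext sphBessel1_eq_mul_sphBessel1Div]
  exact continuous_id.mul continuous_sphBessel1Div

lemma hasDerivAt_sinc {x : ℝ} (hx : x ≠ 0) : HasDerivAt sinc (-sphBessel1 x) x := by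
  have h := (hasDerivAt_sin x).div (hasDerivAt_id' x) hx
  have heq : sinc =ᶠ[𝓝 x] fun y => sin y / y := by
    filter_upwards [eventually_ne_nhds hx] with y hy using sinc_of_ne_zero hy
  refine (h.congr_of_eventuallyEq heq).congr_deriv ?_
  rw [sphBessel1]
  field_simp
  ring

lemma hasDerivAt_sphBessel1 {x : ℝ} (hx : x ≠ 0) :
    HasDerivAt sphBessel1 (sinc x - 2 * sphBessel1Div x) x := by
  have h := ((hasDerivAt_sin x).sub ((hasDerivAt_id' x).mul (hasDerivAt_cos x))).div
    (hasDerivAt_pow 2 x) (pow_ne_zero 2 hx)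
  refine h.congr_deriv ?_
  rw [sinc_of_ne_zero hx, sphBessel1Div_of_ne_zero hx, Pi.sub_apply, Pi.mul_apply]
  field_simp
  ring

noncomputable def sineAntideriv (a x : ℝ) : ℝ :=
  sin x * sphBessel1 (a - x) - cos x * sinc (a - x)

@[fun_prop]
lemma continuous_sineAntideriv (a : ℝ) : Continuous (sineAntideriv a) := by
  unfold sineAntideriv
  fun_prop

lemma hasDerivAt_sineAntideriv {a x : ℝ} (hx : x ≠ a) :
    HasDerivAt (sineAntideriv a) (2 * sphBessel1Div (a - x) * sin x) x := by
  have hax : a - x ≠ 0 := sub_ne_zero.2 hx.symm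
  have hv : HasDerivAt (fun y => a - y) (-1) x := by simpa using (hasDerivAt_id' x).const_sub a
  have hj := (hasDerivAt_sphBessel1 hax).comp x hv
  have hs := (hasDerivAt_sinc hax).comp x hv
  refine (((hasDerivAt_sin x).mul hj).sub ((hasDerivAt_cos x).mul hs)).congr_deriv ?_
  rw [Function.comp_apply, Function.comp_apply, sphBessel1_eq_mul_sphBessel1Div]
  ring

lemma sineAntideriv_of_sin_eq_zero {a x : ℝ} (hx : sin x = 0) (hax : a ≠ x) :
    sineAntideriv a x = -sin a / (a - x) := by
  have hsin_a : sin a = sin (a - x) * cos x := by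
    simpa [hx] using sin_add (a - x) x
  rw [sineAntideriv, hx, sinc_of_ne_zero (sub_ne_zero.2 hax), hsin_a]
  ring

end Real

lemma K2_eq_mul_sphBessel1Div (σ t : ℝ) : K2 σ t = 2 * σ / π * sphBessel1Div (σ * t) := by
  rcases eq_or_ne t 0 with rfl | ht
  · simp [K2, sphBessel1Div]
    ring
  rcases eq_or_ne σ 0 with rfl | hσ
  · simp [K2]
  rw [K2, if_neg ht, sphBessel1Div_of_ne_zero (mul_ne_zero hσ ht)]
  field_simp

lemma integral_K2_mul_sin {σ : ℝ} (hσ : σ ≠ 0) (t b c : ℝ) :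
    ∫ s in b..c, K2 σ (t - s) * Real.sin (σ * s)
      = (sineAntideriv (σ * t) (σ * c) - sineAntideriv (σ * t) (σ * b)) / π := by
  have hderiv : ∀ s ∈ Ioo (min b c) (max b c) \ {t}, HasDerivAt
      (fun s => sineAntideriv (σ * t) (σ * s) / π) (K2 σ (t - s) * Real.sin (σ * s)) s := by
    rintro s ⟨-, hst : s ≠ t⟩
    have hσs : σ * s ≠ σ * t := (mul_right_injective₀ hσ).ne hst
    refine (((hasDerivAt_sineAntideriv hσs).comp s
      ((hasDerivAt_id' s).const_mul σ)).div_const π).congr_deriv ?_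
    rw [K2_eq_mul_sphBessel1Div, mul_sub]
    field_simp
  have hcont : Continuous fun s => K2 σ (t - s) * Real.sin (σ * s) := by
    simp only [K2_eq_mul_sphBessel1Div]
    fun_prop
  rw [integral_eq_of_hasDerivAt_off_countable _ _ (countable_singleton t)
    (by fun_prop) hderiv (hcont.intervalIntegrable b c), sub_div]

theorem K2_sine_image (ν : ℕ) (hν : 0 < ν) (t : ℝ) (ht1 : t ≠ 1) (ht2 : t ≠ -1) :
    ∫ s in (-1:ℝ)..1, K2 ((ν : ℝ) * Real.pi) (t - s) * Real.sin ((ν : ℝ) * Real.pi * s)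
      = 2 * Real.sin ((ν : ℝ) * Real.pi * t) / ((ν : ℝ) * Real.pi ^ 2 * (1 - t ^ 2)) := by
  have hν' : (ν : ℝ) ≠ 0 := Nat.cast_ne_zero.2 hν.ne'
  set σ : ℝ := ν * π with hσ_def
  have hσ : σ ≠ 0 := mul_ne_zero hν' pi_ne_zero
  have hsin_one : Real.sin (σ * 1) = 0 := by rw [mul_one, Real.sin_nat_mul_pi]
  have hsin_neg_one : Real.sin (σ * -1) = 0 := by rw [mul_neg, Real.sin_neg, hsin_one, neg_zero]
  rw [integral_K2_mul_sin hσ,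
    sineAntideriv_of_sin_eq_zero hsin_one ((mul_right_injective₀ hσ).ne ht1),
    sineAntideriv_of_sin_eq_zero hsin_neg_one ((mul_right_injective₀ hσ).ne ht2)]
  have h1 : t - 1 ≠ 0 := sub_ne_zero.2 ht1
  have h2 : t + 1 ≠ 0 := by rwa [← sub_neg_eq_add, sub_ne_zero]
  have h12 : 1 - t ^ 2 ≠ 0 := by
    rw [show 1 - t ^ 2 = -((t - 1) * (t + 1)) by ring]
    exact neg_ne_zero.2 (mul_ne_zero h1 h2)
  rw [hσ_def]
  field_simp
  ring
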